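/- Let F be a field, let m, n be positive integers, and let g be the F-Lie algebra on F^m × F^n × Mat_{m×n}(F) with bracket [(u, v, A), (u′, v′, A′)] = (0, 0, u (v′)ᵀ − u′ vᵀ). Let ω : g → F be an F-linear map, let B ∈ Mat_{m×n}(F) be the matrix with entries B_{ij} = ω(0, 0, E_{ij}), and let r = rank(B). Then the derived subalgebra [rad(ω), rad(ω)] of the Lie subalgebra rad(ω) = { x ∈ g : ω([x, y]) = 0 for all y ∈ g } has dimension (m − r)(n − r) over F. -/

import Mathlib

open Matrix

/-- The underlying module of the 2-nilpotent Lie lattice `𝒢_{m×n}`: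
`R^m × R^n × Mat_{m×n}(R)`. -/
abbrev Gmn (R : Type*) [CommRing R] (m n : ℕ) : Type _ :=
  (Fin m → R) × (Fin n → R) × Matrix (Fin m) (Fin n) R

/-- The Lie bracket `[(u, v, A), (u′, v′, A′)] = (0, 0, u (v′)ᵀ − u′ vᵀ)`. -/
instance Gmn.instLieRing (R : Type*) [CommRing R] (m n : ℕ) : LieRing (Gmn R m n) where
  bracket x y := (0, 0, vecMulVec x.1 y.2.1 - vecMulVec y.1 x.2.1)
  add_lie x y z := by
    refine Prod.ext (by simp) (Prod.ext (by simp) ?_)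
    show vecMulVec (x.1 + y.1) z.2.1 - vecMulVec z.1 (x.2.1 + y.2.1) =
      (vecMulVec x.1 z.2.1 - vecMulVec z.1 x.2.1) + (vecMulVec y.1 z.2.1 - vecMulVec z.1 y.2.1)
    ext i j
    simp [vecMulVec]
    ring
  lie_add x y z := by
    refine Prod.ext (by simp) (Prod.ext (by simp) ?_)
    show vecMulVec x.1 (y.2.1 + z.2.1) - vecMulVec (y.1 + z.1) x.2.1 =
      (vecMulVec x.1 y.2.1 - vecMulVec y.1 x.2.1) + (vecMulVec x.1 z.2.1 - vecMulVec z.1 x.2.1)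
    ext i j
    simp [vecMulVec]
    ring
  lie_self x := by
    refine Prod.ext (by simp) (Prod.ext (by simp) ?_)
    show vecMulVec x.1 x.2.1 - vecMulVec x.1 x.2.1 = 0
    simp
  leibniz_lie x y z := by
    refine Prod.ext (by simp) (Prod.ext (by simp) ?_)
    show vecMulVec x.1 (0 : Fin n → R) - vecMulVec (0 : Fin m → R) x.2.1 =
      (vecMulVec (0 : Fin m → R) z.2.1 - vecMulVec z.1 (0 : Fin n → R)) +
        (vecMulVec y.1 (0 : Fin n → R) - vecMulVec (0 : Fin m → R) y.2.1)
    ext i j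
    simp [vecMulVec]

instance Gmn.instLieAlgebra (R : Type*) [CommRing R] (m n : ℕ) :
    LieAlgebra R (Gmn R m n) where
  lie_smul t x y := by
    refine Prod.ext ?_ (Prod.ext ?_ ?_)
    · show (0 : Fin m → R) = t • (0 : Fin m → R); simp
    · show (0 : Fin n → R) = t • (0 : Fin n → R); simp
    show vecMulVec x.1 (t • y.2.1) - vecMulVec (t • y.1) x.2.1 =
      t • (vecMulVec x.1 y.2.1 - vecMulVec y.1 x.2.1)
    ext i j
    simp [vecMulVec]
    ring

/-- The radical of a linear form `ω` on `𝒢_{m×n} ⊗ F`: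
`rad(ω) = { x : ω([x, y]) = 0 for all y }`, as an `F`-subspace. -/
def radSub {F : Type*} [Field F] {m n : ℕ} (ω : Gmn F m n →ₗ[F] F) :
    Submodule F (Gmn F m n) where
  carrier := {x | ∀ y, ω ⁅x, y⁆ = 0}
  add_mem' := by
    intro a b ha hb y
    rw [add_lie, map_add, ha, hb, add_zero]
  zero_mem' := by
    intro y
    rw [zero_lie, map_zero]
  smul_mem' := by
    intro c a ha y
    rw [smul_lie, LinearMap.map_smul, ha, smul_zero]

/-! Since `ω⁅(u, v, A), (u', v', A')⁆ = ⟨Bᵀu, v'⟩ - ⟨Bv, u'⟩`, the radical is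
`ker Bᵀ × ker B × Mat_{m×n}(F)`. Its brackets lie in the centre `Mat_{m×n}(F)` and span the
image of `ker Bᵀ ⊗ ker B` under the isomorphism `F^m ⊗ F^n ≃ Mat_{m×n}(F)`, `u ⊗ v ↦ u vᵀ`.
Over a field `ker Bᵀ ⊗ ker B → F^m ⊗ F^n` is injective, so the dimension is
`dim ker Bᵀ · dim ker B = (m - r)(n - r)` by rank–nullity. -/

open Module TensorProduct

noncomputable def tensorProductEquivMatrix (R ι κ : Type*) [CommRing R] [Fintype ι]
    [DecidableEq ι] : (ι → R) ⊗[R] (κ → R) ≃ₗ[R] Matrix ι κ R :=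
  TensorProduct.comm R _ _ ≪≫ₗ piScalarRight R R (κ → R) ι

@[simp]
theorem tensorProductEquivMatrix_tmul {R ι κ : Type*} [CommRing R] [Fintype ι] [DecidableEq ι]
    (u : ι → R) (v : κ → R) : tensorProductEquivMatrix R ι κ (u ⊗ₜ v) = vecMulVec u v := by
  ext i j
  change piScalarRight R R (κ → R) ι (v ⊗ₜ u) i j = u i * v j
  simp

theorem finrank_span_vecMulVec {F ι κ : Type*} [Field F] [Fintype ι] [Fintype κ]
    (U : Submodule F (ι → F)) (V : Submodule F (κ → F)) :
    finrank F (Submodule.span F {M | ∃ u ∈ U, ∃ v ∈ V, M = vecMulVec u v}) =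
      finrank F U * finrank F V := by
  classical
  have hspan : Submodule.span F {M | ∃ u ∈ U, ∃ v ∈ V, M = vecMulVec u v} =
      (LinearMap.range (mapIncl U V)).map (tensorProductEquivMatrix F ι κ : _ →ₗ[F] _) := by
    rw [range_map_eq_span_tmul, Submodule.map_span]
    congr 1
    ext M
    simp [eq_comm, and_assoc]
  rw [hspan, LinearEquiv.finrank_map_eq, LinearMap.finrank_range_of_inj
    (map_injective_of_flat_flat _ _ U.injective_subtype V.injective_subtype),
    finrank_tensorProduct]

theorem Matrix.finrank_ker_mulVecLin {F ι κ : Type*} [Field F] [Fintype κ]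
    (A : Matrix ι κ F) : finrank F (LinearMap.ker A.mulVecLin) = Fintype.card κ - A.rank := by
  have := LinearMap.finrank_range_add_finrank_ker A.mulVecLin
  rw [finrank_fintype_fun_eq_card] at this
  rw [rank]
  omega

theorem LinearMap.apply_vecMulVec {R ι κ : Type*} [CommRing R] [Fintype ι] [Fintype κ]
    [DecidableEq ι] [DecidableEq κ] (φ : Matrix ι κ R →ₗ[R] R) (u : ι → R) (v : κ → R) :
    φ (vecMulVec u v) = u ⬝ᵥ (Matrix.of fun i j => φ (Matrix.single i j 1)) *ᵥ v := by
  conv_lhs => rw [matrix_eq_sum_single (vecMulVec u v)]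
  simp only [map_sum, vecMulVec_apply, dotProduct, mulVec, of_apply, Finset.mul_sum]
  refine Finset.sum_congr rfl fun i _ => Finset.sum_congr rfl fun j _ => ?_
  rw [← mul_one (u i * v j), ← smul_eq_mul, ← smul_single, map_smul, smul_eq_mul]
  ring

namespace Gmn

variable {F : Type*} [Field F] {m n : ℕ}

noncomputable def centerInclusion (F : Type*) [Field F] (m n : ℕ) :
    Matrix (Fin m) (Fin n) F →ₗ[F] Gmn F m n :=
  LinearMap.inr F _ _ ∘ₗ LinearMap.inr F _ _

theorem centerInclusion_injective : Function.Injective (centerInclusion F m n) :=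
  LinearMap.inr_injective.comp LinearMap.inr_injective

theorem lie_eq_centerInclusion (x y : Gmn F m n) :
    ⁅x, y⁆ = centerInclusion F m n (vecMulVec x.1 y.2.1 - vecMulVec y.1 x.2.1) := rfl

theorem apply_lie (ω : Gmn F m n →ₗ[F] F) (B : Matrix (Fin m) (Fin n) F)
    (hB : ∀ i j, B i j = ω (0, 0, Matrix.single i j 1)) (x y : Gmn F m n) :
    ω ⁅x, y⁆ = (Bᵀ *ᵥ x.1) ⬝ᵥ y.2.1 - (B *ᵥ x.2.1) ⬝ᵥ y.1 := by
  have hB' : Matrix.of (fun i j => (ω ∘ₗ centerInclusion F m n) (Matrix.single i j 1)) = B :=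
    Matrix.ext fun i j => (hB i j).symm
  rw [lie_eq_centerInclusion, ← LinearMap.comp_apply, map_sub, LinearMap.apply_vecMulVec,
    LinearMap.apply_vecMulVec, hB', dotProduct_mulVec, mulVec_transpose, dotProduct_comm y.1]

theorem mem_radSub_iff (ω : Gmn F m n →ₗ[F] F) (B : Matrix (Fin m) (Fin n) F)
    (hB : ∀ i j, B i j = ω (0, 0, Matrix.single i j 1)) (x : Gmn F m n) :
    x ∈ radSub ω ↔ x.1 ∈ LinearMap.ker Bᵀ.mulVecLin ∧ x.2.1 ∈ LinearMap.ker B.mulVecLin := by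
  simp only [LinearMap.mem_ker, mulVecLin_apply]
  refine ⟨fun hx => ⟨dotProduct_eq_zero _ fun w => ?_, dotProduct_eq_zero _ fun w => ?_⟩,
    fun ⟨h₁, h₂⟩ y => by simp [apply_lie ω B hB, h₁, h₂]⟩
  · simpa [apply_lie ω B hB] using hx (0, w, 0)
  · simpa [apply_lie ω B hB] using hx (w, 0, 0)

theorem span_lie_radSub (ω : Gmn F m n →ₗ[F] F) (B : Matrix (Fin m) (Fin n) F)
    (hB : ∀ i j, B i j = ω (0, 0, Matrix.single i j 1)) :
    Submodule.span F {z : Gmn F m n | ∃ x ∈ radSub ω, ∃ y ∈ radSub ω, z = ⁅x, y⁆} =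
      (Submodule.span F {M | ∃ u ∈ LinearMap.ker Bᵀ.mulVecLin, ∃ v ∈ LinearMap.ker B.mulVecLin,
        M = vecMulVec u v}).map (centerInclusion F m n) := by
  rw [Submodule.map_span]
  refine le_antisymm (Submodule.span_le.2 ?_) (Submodule.span_le.2 ?_)
  · rintro _ ⟨x, hx, y, hy, rfl⟩
    rw [mem_radSub_iff ω B hB] at hx hy
    rw [lie_eq_centerInclusion, map_sub]
    exact sub_mem (Submodule.subset_span ⟨_, ⟨x.1, hx.1, y.2.1, hy.2, rfl⟩, rfl⟩)
      (Submodule.subset_span ⟨_, ⟨y.1, hy.1, x.2.1, hx.2, rfl⟩, rfl⟩)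
  · rintro _ ⟨_, ⟨u, hu, v, hv, rfl⟩, rfl⟩
    refine Submodule.subset_span ⟨(u, 0, 0), (mem_radSub_iff ω B hB _).2 ⟨hu, zero_mem _⟩,
      (0, v, 0), (mem_radSub_iff ω B hB _).2 ⟨zero_mem _, hv⟩, ?_⟩
    simp [lie_eq_centerInclusion]

end Gmn

theorem derived_rad_omega_gmn_general (F : Type*) [Field F] (m n : ℕ)
    (ω : Gmn F m n →ₗ[F] F)
    (B : Matrix (Fin m) (Fin n) F)
    (hB : ∀ i j, B i j = ω (0, 0, Matrix.single i j 1)) :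
    Module.finrank F
      (Submodule.span F {z : Gmn F m n | ∃ x ∈ radSub ω, ∃ y ∈ radSub ω, z = ⁅x, y⁆}) =
    (m - B.rank) * (n - B.rank) := by
  rw [Gmn.span_lie_radSub ω B hB,
    ← (Submodule.equivMapOfInjective _ Gmn.centerInclusion_injective _).finrank_eq,
    finrank_span_vecMulVec, finrank_ker_mulVecLin, finrank_ker_mulVecLin, rank_transpose,
    Fintype.card_fin, Fintype.card_fin]

/-- The derived subalgebra `[rad(ω), rad(ω)]` (the span of all brackets of elements of
`rad(ω)`) has dimension `(m − r)(n − r)`, where `r` is the rank of the matrix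
`B = (ω(z_{ij}))_{ij}`. -/
theorem derived_rad_omega_gmn (F : Type*) [Field F] (m n : ℕ) (hm : 1 ≤ m) (hn : 1 ≤ n)
    (ω : Gmn F m n →ₗ[F] F)
    (B : Matrix (Fin m) (Fin n) F)
    (hB : ∀ i j, B i j = ω (0, 0, Matrix.single i j 1)) :
    Module.finrank F
      (Submodule.span F {z : Gmn F m n | ∃ x ∈ radSub ω, ∃ y ∈ radSub ω, z = ⁅x, y⁆}) =
    (m - B.rank) * (n - B.rank) :=
  derived_rad_omega_gmn_general F m n ω B hB
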